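/- Under the same hypotheses, for every open set O ⊆ (-∞, 0] and every z ∈ O, liminf_{n→∞} aₙ log P( aₙ n L(n)(Zₙ - M) ∈ O ) ≥ z. -/

import Mathlib

/-!
Write `cₙ = aₙ n L(n)`. Pick `l < z` with `(l, z] ⊆ O`; then
`P(cₙ (Zₙ - M) ∈ (l, z]) = F(M + z/cₙ)ⁿ - F(M + l/cₙ)ⁿ`.
Since `log F(M + h) ~ d h` as `h ↑ 0` and `aₙ n / cₙ → 1/d`, we get `aₙ log F(M + u/cₙ)ⁿ → u`
for every `u ≤ 0`. At the scale `1/aₙ` the second power is exponentially smaller than the first,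
so `aₙ log P(cₙ (Zₙ - M) ∈ O) ≥ aₙ log P(cₙ (Zₙ - M) ∈ (l, z]) → z`.
-/

open MeasureTheory Set Filter
open scoped Topology

/-- `maxFirst W n ω = max {W 0 ω, …, W (n-1) ω}` for `n ≥ 1` (junk value `W 0 ω` for `n = 0`). -/
noncomputable def maxFirst {Ω : Type*} (W : ℕ → Ω → ℝ) : ℕ → Ω → ℝ
  | 0, ω => W 0 ω
  | n + 1, ω => max (maxFirst W n ω) (W n ω)

section MaxFirst

variable {Ω : Type*} (W : ℕ → Ω → ℝ)

lemma maxFirst_succ_le_iff (ω : Ω) (x : ℝ) (n : ℕ) :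
    maxFirst W (n + 1) ω ≤ x ↔ ∀ i < n + 1, W i ω ≤ x := by
  induction n with
  | zero => simp [maxFirst]
  | succ n ih => rw [maxFirst, max_le_iff, ih, Nat.forall_lt_succ_right (n := n + 1)]

variable [MeasurableSpace Ω]

lemma measurable_maxFirst (hmeas : ∀ i, Measurable (W i)) : ∀ n, Measurable (maxFirst W n)
  | 0 => hmeas 0
  | n + 1 => (measurable_maxFirst hmeas n).max (hmeas n)

variable {W} (P : Measure Ω) {μ : Measure ℝ}

lemma measure_maxFirst_le (hindep : ProbabilityTheory.iIndepFun W P)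
    (hdist : ∀ i, Measure.map (W i) P = μ) (hmeas : ∀ i, Measurable (W i)) {n : ℕ} (hn : n ≠ 0)
    (x : ℝ) : P {ω | maxFirst W n ω ≤ x} = μ (Iic x) ^ n := by
  obtain ⟨n, rfl⟩ := Nat.exists_eq_succ_of_ne_zero hn
  have hset : {ω | maxFirst W (n + 1) ω ≤ x} = ⋂ i ∈ Finset.range (n + 1), W i ⁻¹' Iic x := by
    ext ω
    simp [maxFirst_succ_le_iff]
  have hW : ∀ i, P (W i ⁻¹' Iic x) = μ (Iic x) := fun i => by
    rw [← hdist i, Measure.map_apply (hmeas i) measurableSet_Iic]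
  rw [hset, hindep.meas_biInter fun i _ => ⟨Iic x, measurableSet_Iic, rfl⟩,
    Finset.prod_congr rfl fun i _ => hW i, Finset.prod_const, Finset.card_range]

lemma measureReal_maxFirst_mem_Ioc [IsFiniteMeasure P] (hindep : ProbabilityTheory.iIndepFun W P)
    (hdist : ∀ i, Measure.map (W i) P = μ) (hmeas : ∀ i, Measurable (W i)) {n : ℕ} (hn : n ≠ 0)
    {α β : ℝ} (hαβ : α ≤ β) :
    P.real {ω | maxFirst W n ω ∈ Ioc α β} = μ.real (Iic β) ^ n - μ.real (Iic α) ^ n := by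
  have hset : {ω | maxFirst W n ω ∈ Ioc α β} =
      {ω | maxFirst W n ω ≤ β} \ {ω | maxFirst W n ω ≤ α} := by
    ext ω
    simp [and_comm]
  have hsub : {ω | maxFirst W n ω ≤ α} ⊆ {ω | maxFirst W n ω ≤ β} := fun ω hω => le_trans hω hαβ
  rw [hset,
    measureReal_sdiff hsub (measurableSet_le (measurable_maxFirst W hmeas n) measurable_const)]
  simp only [measureReal_def, measure_maxFirst_le P hindep hdist hmeas hn, ENNReal.toReal_pow]

end MaxFirst

lemma mul_sub_mem_Ioc_iff {c M x l r : ℝ} (hc : 0 < c) :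
    c * (x - M) ∈ Ioc l r ↔ x ∈ Ioc (M + l / c) (M + r / c) := by
  rw [mem_Ioc, mem_Ioc, ← lt_sub_iff_add_lt', ← sub_le_iff_le_add', div_lt_iff₀ hc,
    le_div_iff₀ hc, mul_comm]

lemma coe_mul_log_measureReal_le {Ω : Type*} [MeasurableSpace Ω] {P : Measure Ω}
    [IsFiniteMeasure P] {A B : Set Ω} (hAB : A ⊆ B) (hA : 0 < P.real A) {a : ℝ} (ha : 0 ≤ a) :
    ((a * Real.log (P.real A) : ℝ) : EReal) ≤ a * ENNReal.log (P B) := by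
  rw [EReal.coe_mul, measureReal_def, ← ENNReal.log_pos_real' hA]
  exact mul_le_mul_of_nonneg_left (ENNReal.log_monotone (measure_mono hAB)) (EReal.coe_nonneg.2 ha)

lemma exists_Ioc_subset_of_isOpen_preimage_val {O : Set ℝ} {b z : ℝ}
    (hO : IsOpen (Subtype.val ⁻¹' O : Set (Iic b))) (hz : z ∈ O) (hzb : z ≤ b) :
    ∃ l < z, Ioc l z ⊆ O := by
  have hnhds : O ∈ 𝓝[Iic b] z := by
    have := mem_nhds_subtype_iff_nhdsWithin.1 (hO.mem_nhds (x := (⟨z, hzb⟩ : Iic b)) hz)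
    exact mem_of_superset this (image_preimage_subset _ _)
  exact mem_nhdsLE_iff_exists_Ioc_subset.1 (nhdsWithin_mono _ (Iic_subset_Iic.2 hzb) hnhds)

lemma tendsto_log_div_sub_of_hasDerivWithinAt {F : ℝ → ℝ} {M d : ℝ} (hFM : F M = 1)
    (hderiv : HasDerivWithinAt F d (Iio M) M) :
    Tendsto (fun y => Real.log (F y) / (y - M)) (𝓝[<] M) (𝓝 d) := by
  have hlog : HasDerivWithinAt (fun y => Real.log (F y)) d (Iio M) M := by
    simpa [hFM] using hderiv.log (by simp [hFM])
  refine ((hasDerivWithinAt_iff_tendsto_slope' self_notMem_Iio).1 hlog).congr fun y => ?_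
  rw [slope_def_field, hFM, Real.log_one, sub_zero]

lemma tendsto_add_div_nhdsLT {c : ℕ → ℝ} (hc : Tendsto c atTop atTop) (M : ℝ) {u : ℝ}
    (hu : u < 0) : Tendsto (fun n => M + u / c n) atTop (𝓝[<] M) := by
  refine tendsto_nhdsWithin_iff.2 ⟨?_, ?_⟩
  · simpa using tendsto_const_nhds.add (tendsto_const_nhds.div_atTop hc)
  · filter_upwards [hc.eventually_gt_atTop 0] with n hcn
    simpa using div_neg_of_neg_of_pos hu hcn

lemma eventually_pos_comp_add_div {F : ℝ → ℝ} {M d : ℝ} {c : ℕ → ℝ} (hFM : F M = 1)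
    (hderiv : HasDerivWithinAt F d (Iio M) M) (hc : Tendsto c atTop atTop) {u : ℝ} (hu : u ≤ 0) :
    ∀ᶠ n in atTop, 0 < F (M + u / c n) := by
  rcases hu.lt_or_eq with hu | rfl
  · have := hderiv.continuousWithinAt.tendsto.comp (tendsto_add_div_nhdsLT hc M hu)
    rw [hFM] at this
    exact this.eventually (eventually_gt_nhds one_pos)
  · simp [hFM]

lemma tendsto_mul_comp_add_div {g : ℝ → ℝ} {M d κ u : ℝ} {b c : ℕ → ℝ}
    (hg : Tendsto (fun y => g y / (y - M)) (𝓝[<] M) (𝓝 d)) (hc : Tendsto c atTop atTop)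
    (hbc : Tendsto (fun n => b n / c n) atTop (𝓝 κ)) (hu : u < 0) :
    Tendsto (fun n => b n * g (M + u / c n)) atTop (𝓝 (u * κ * d)) := by
  have hquot := hg.comp (tendsto_add_div_nhdsLT hc M hu)
  refine ((tendsto_const_nhds.mul hbc).mul hquot).congr' ?_
  filter_upwards [hc.eventually_gt_atTop 0] with n hcn
  simp only [Function.comp_apply, add_sub_cancel_left]
  generalize g (M + u / c n) = y
  field_simp [hu.ne]

lemma tendsto_mul_log_pow_add_div {F : ℝ → ℝ} {M d : ℝ} {a L : ℕ → ℝ} (hFM : F M = 1)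
    (hderiv : HasDerivWithinAt F d (Iio M) M) (hd : d ≠ 0) (hL : Tendsto L atTop (𝓝 d))
    (hc : Tendsto (fun n => a n * n * L n) atTop atTop) {u : ℝ} (hu : u ≤ 0) :
    Tendsto (fun n => a n * Real.log (F (M + u / (a n * n * L n)) ^ n)) atTop (𝓝 u) := by
  rcases hu.lt_or_eq with hu | rfl
  · have hratio : Tendsto (fun n => a n * n / (a n * n * L n)) atTop (𝓝 d⁻¹) := by
      refine (hL.inv₀ hd).congr' ?_
      filter_upwards [hc.eventually_ne_atTop 0] with n hcn
      rw [div_mul_cancel_left₀ (left_ne_zero_of_mul hcn)]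
    have := tendsto_mul_comp_add_div (tendsto_log_div_sub_of_hasDerivWithinAt hFM hderiv) hc
      hratio hu
    rw [mul_assoc, inv_mul_cancel₀ hd, mul_one] at this
    refine this.congr fun n => ?_
    rw [Real.log_pow, mul_assoc]
  · simp [hFM]

lemma eventually_lt_of_tendsto_mul_log {a p q : ℕ → ℝ} {l r : ℝ} (ha : ∀ n, 0 < a n)
    (hp : ∀ᶠ n in atTop, 0 < p n) (hq : ∀ᶠ n in atTop, 0 < q n)
    (hpr : Tendsto (fun n => a n * Real.log (p n)) atTop (𝓝 r))
    (hql : Tendsto (fun n => a n * Real.log (q n)) atTop (𝓝 l)) (hlr : l < r) :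
    ∀ᶠ n in atTop, q n < p n := by
  filter_upwards [hql.eventually_lt hpr hlr, hp, hq] with n hlt hpn hqn
  exact (Real.log_lt_log_iff hqn hpn).1 (lt_of_mul_lt_mul_left hlt (ha n).le)

lemma tendsto_mul_log_sub {a p q : ℕ → ℝ} {l r : ℝ} (ha : ∀ n, 0 < a n)
    (ha0 : Tendsto a atTop (𝓝 0)) (hp : ∀ᶠ n in atTop, 0 < p n) (hq : ∀ᶠ n in atTop, 0 < q n)
    (hpr : Tendsto (fun n => a n * Real.log (p n)) atTop (𝓝 r))
    (hql : Tendsto (fun n => a n * Real.log (q n)) atTop (𝓝 l)) (hlr : l < r) :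
    Tendsto (fun n => a n * Real.log (p n - q n)) atTop (𝓝 r) := by
  have ha_inv : Tendsto (fun n => (a n)⁻¹) atTop atTop :=
    (tendsto_nhdsWithin_iff.2 ⟨ha0, .of_forall ha⟩).inv_tendsto_nhdsGT_zero
  have hgap : Tendsto (fun n => Real.log (q n) - Real.log (p n)) atTop atBot := by
    refine (ha_inv.atTop_mul_neg (sub_neg.2 hlr) (hql.sub hpr)).congr fun n => ?_
    rw [← mul_sub, inv_mul_cancel_left₀ (ha n).ne']
  have hratio : Tendsto (fun n => q n / p n) atTop (𝓝 0) := by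
    refine (Real.tendsto_exp_atBot.comp hgap).congr' ?_
    filter_upwards [hp, hq] with n hpn hqn
    rw [Function.comp_apply, Real.exp_sub, Real.exp_log hpn, Real.exp_log hqn]
  have hcorr : Tendsto (fun n => a n * Real.log (1 - q n / p n)) atTop (𝓝 0) := by
    have h1 : Tendsto (fun n => 1 - q n / p n) atTop (𝓝 1) := by
      simpa using (tendsto_const_nhds (x := (1 : ℝ))).sub hratio
    simpa using ha0.mul ((Real.continuousAt_log one_ne_zero).tendsto.comp h1)
  have hsum := hpr.add hcorr
  rw [add_zero] at hsum
  refine hsum.congr' ?_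
  filter_upwards [hp, eventually_lt_of_tendsto_mul_log ha hp hq hpr hql hlr] with n hpn hqp
  rw [← mul_add, ← Real.log_mul hpn.ne' (sub_pos.2 ((div_lt_one hpn).2 hqp)).ne', mul_one_sub,
    mul_div_cancel₀ _ hpn.ne']

theorem stmt_8_general {Ω : Type*} [MeasurableSpace Ω] (P : Measure Ω) [IsProbabilityMeasure P]
    (W : ℕ → Ω → ℝ) (μ : Measure ℝ)
    (hmeas : ∀ i, Measurable (W i))
    (hindep : ProbabilityTheory.iIndepFun W P)
    (hdist : ∀ i, Measure.map (W i) P = μ)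
    (M : ℝ) (F : ℝ → ℝ) (hF : ∀ x, F x = (μ (Iic x)).toReal) (hFM : F M = 1)
    (d : ℝ) (hd : 0 < d) (hderiv : HasDerivWithinAt F d (Iio M) M)
    (L : ℕ → ℝ) (hL : Tendsto L atTop (nhds d))
    (a : ℕ → ℝ) (ha_pos : ∀ n, 0 < a n) (ha0 : Tendsto a atTop (nhds 0))
    (han : Tendsto (fun n : ℕ => a n * n) atTop atTop)
    (O : Set ℝ) (hO_sub : O ⊆ Iic 0)
    (hO_open : IsOpen (Subtype.val ⁻¹' O : Set (Iic (0 : ℝ))))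
    (z : ℝ) (hz : z ∈ O) :
    ((z : ℝ) : EReal) ≤
      liminf (fun n : ℕ =>
        ((a n : ℝ) : EReal) *
          ENNReal.log (P {ω | a n * n * L n * (maxFirst W n ω - M) ∈ O})) atTop := by
  have hz0 : z ≤ 0 := hO_sub hz
  obtain ⟨l, hlz, hIoc⟩ := exists_Ioc_subset_of_isOpen_preimage_val hO_open hz hz0
  have hl0 : l ≤ 0 := hlz.le.trans hz0
  set c : ℕ → ℝ := fun n => a n * n * L n
  have hc : Tendsto c atTop atTop := han.atTop_mul_pos hd hL
  have hpos {u : ℝ} (hu : u ≤ 0) : ∀ᶠ n in atTop, 0 < F (M + u / c n) ^ n :=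
    (eventually_pos_comp_add_div hFM hderiv hc hu).mono fun n h => pow_pos h n
  have hlog_z := tendsto_mul_log_pow_add_div hFM hderiv hd.ne' hL hc hz0
  have hlog_l := tendsto_mul_log_pow_add_div hFM hderiv hd.ne' hL hc hl0
  have hlim := tendsto_mul_log_sub ha_pos ha0 (hpos hz0) (hpos hl0) hlog_z hlog_l hlz
  rw [← ((continuous_coe_real_ereal.tendsto z).comp hlim).liminf_eq]
  refine liminf_le_liminf ?_
  filter_upwards [hc.eventually_gt_atTop 0, eventually_ne_atTop 0,
    eventually_lt_of_tendsto_mul_log ha_pos (hpos hz0) (hpos hl0) hlog_z hlog_l hlz]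
    with n hcn hn hlt
  have hprob := measureReal_maxFirst_mem_Ioc P hindep hdist hmeas hn
    (α := M + l / c n) (β := M + z / c n) (by gcongr)
  have hF' : ∀ x, F x = μ.real (Iic x) := hF
  rw [← hF', ← hF'] at hprob
  rw [Function.comp_apply, ← hprob]
  refine coe_mul_log_measureReal_le (fun ω hω => ?_) (hprob ▸ sub_pos.2 hlt) (ha_pos n).le
  exact hIoc ((mul_sub_mem_Ioc_iff hcn).2 hω)

theorem stmt_8 {Ω : Type*} [MeasurableSpace Ω] (P : Measure Ω) [IsProbabilityMeasure P]
    (W : ℕ → Ω → ℝ) (μ : Measure ℝ) [IsProbabilityMeasure μ]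
    (hmeas : ∀ i, Measurable (W i))
    (hindep : ProbabilityTheory.iIndepFun W P)
    (hdist : ∀ i, Measure.map (W i) P = μ)
    (M : ℝ) (F : ℝ → ℝ) (hF : ∀ x, F x = (μ (Iic x)).toReal) (hFM : F M = 1)
    (d : ℝ) (hd : 0 < d) (hderiv : HasDerivWithinAt F d (Iio M) M)
    (L : ℕ → ℝ) (hL : Tendsto L atTop (nhds d))
    (a : ℕ → ℝ) (ha_pos : ∀ n, 0 < a n) (ha0 : Tendsto a atTop (nhds 0))
    (han : Tendsto (fun n : ℕ => a n * n) atTop atTop)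
    (O : Set ℝ) (hO_sub : O ⊆ Iic 0)
    (hO_open : IsOpen (Subtype.val ⁻¹' O : Set (Iic (0 : ℝ))))
    (z : ℝ) (hz : z ∈ O) :
    ((z : ℝ) : EReal) ≤
      liminf (fun n : ℕ =>
        ((a n : ℝ) : EReal) *
          ENNReal.log (P {ω | a n * n * L n * (maxFirst W n ω - M) ∈ O})) atTop :=
  stmt_8_general P W μ hmeas hindep hdist M F hF hFM d hd hderiv L hL a ha_pos ha0 han O hO_sub
    hO_open z hz
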